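/- arXiv:0904.4507 — 5 statements merged into one kernel-verified Lean document; each statement's English description precedes it below -/
import Mathlib

section
/- If real numbers a_1,...,a_n satisfy a_1+...+a_n=0, then for all j,k in {1,...,n}, |sum_{i=1}^j a_i - sum_{i=1}^k a_i| <= (1/2) sum_{i=1}^n |a_i|. -/
/-! A set of terms and its complement have opposite sums when the total is zero, so each of the
two sums is bounded in absolute value by the ℓ¹-mass on its own side, hence by half the total mass.
The difference of two partial sums is the sum over the block of indices between them. -/

open scoped BigOperators Classical

lemma abs_sum_le_half_sum_abs_of_subset {ι K : Type*} [Field K] [LinearOrder K]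
    [IsStrictOrderedRing K] {s t : Finset ι} {f : ι → K} (hst : s ⊆ t)
    (ht : ∑ i ∈ t, f i = 0) :
    |∑ i ∈ s, f i| ≤ (1 / 2) * ∑ i ∈ t, |f i| := by
  have h_compl : ∑ i ∈ s, f i = -∑ i ∈ t \ s, f i := by
    rw [Finset.sum_sdiff_eq_sub hst, ht]; ring
  have h_inside : |∑ i ∈ s, f i| ≤ ∑ i ∈ s, |f i| := Finset.abs_sum_le_sum_abs _ _
  have h_outside : |∑ i ∈ s, f i| ≤ ∑ i ∈ t \ s, |f i| := by
    rw [h_compl, abs_neg]; exact Finset.abs_sum_le_sum_abs _ _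
  have h_mass : ∑ i ∈ t \ s, |f i| + ∑ i ∈ s, |f i| = ∑ i ∈ t, |f i| := Finset.sum_sdiff hst
  linarith

theorem partial_sums_diff_le (n : ℕ) (a : ℕ → ℝ)
    (hsum : ∑ i ∈ Finset.Icc 1 n, a i = 0)
    (j k : ℕ) (hj : j ∈ Finset.Icc 1 n) (hk : k ∈ Finset.Icc 1 n) :
    |∑ i ∈ Finset.Icc 1 j, a i - ∑ i ∈ Finset.Icc 1 k, a i| ≤
      (1 / 2) * ∑ i ∈ Finset.Icc 1 n, |a i| := by
  wlog hjk : j ≤ k generalizing j k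
  · rw [abs_sub_comm]
    exact this k j hk hj (le_of_not_ge hjk)
  have hk_le : Finset.Icc 1 k ⊆ Finset.Icc 1 n :=
    Finset.Icc_subset_Icc_right (Finset.mem_Icc.mp hk).2
  rw [abs_sub_comm, ← Finset.sum_sdiff_eq_sub (Finset.Icc_subset_Icc_right hjk)]
  exact abs_sum_le_half_sum_abs_of_subset (Finset.sdiff_subset.trans hk_le) hsum
end

section
/- For any rotor walk (x_0,r_0),(x_1,r_1),... associated with the Markov kernel p, any bounded function f : V -> R, and any time t, one has |sum_{s=0}^{t-1} Delta f(x_s)| <= |f(x_t) - f(x_0)| + (1/2) * sum_{u,v in V} d(u) p(u,v) |f(u) - f(v) + Delta f(u)|, where Delta f(u) := sum_v p(u,v) f(v) - f(u). -/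
/-!
Telescoping `f` along the walk leaves `∑ₛ (Pf(xₛ) - f(xₛ₊₁))`, where `Pf(u) = ∑ᵥ p(u,v) f(v)`.
Grouped by the position `u = xₛ`, the `k`-th departure from `u` follows rotor direction
`r₀(u) + 1 + k mod d(u)`, so these terms form a `d(u)`-periodic sequence whose period sums to
`d(u) Pf(u) - ∑ᵢ f(u⁽ⁱ⁾) = 0`. A partial sum of such a sequence is at most half the total
absolute variation over one period, which is `∑ᵥ d(u) p(u,v) |Pf(u) - f(v)|`.
-/

open scoped BigOperators Classical

/-- `(x, r)` is a rotor walk for the rotor mechanism `(d, succ)`.  Rotor values are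
`0`-based: rotor value `j` at `u` means the rotor points to `succ u j`
(corresponding to `u^(j+1)` in `1`-based notation).  At each step the rotor at the
current particle position is incremented cyclically and the particle moves in the
new rotor direction. -/
def IsRotorWalk {V : Type*} (d : V → ℕ) (succ : V → ℕ → V)
    (x : ℕ → V) (r : ℕ → V → ℕ) : Prop :=
  (∀ v, r 0 v < d v) ∧
  (∀ t, r (t + 1) (x t) = (r t (x t) + 1) % d (x t)) ∧
  (∀ t v, v ≠ x t → r (t + 1) v = r t v) ∧
  (∀ t, x (t + 1) = succ (x t) (r (t + 1) (x t)))

/-- the number of visits of the walk `x` to `v` strictly before time `t` -/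
noncomputable def nvisits {V : Type*} (x : ℕ → V) (t : ℕ) (v : V) : ℕ :=
  ((Finset.range t).filter fun s => x s = v).card

/-- the rotor mechanism `(d, succ)` realizes the transition kernel `p`:
`p u v` is the proportion of the `d u` successors of `u` equal to `v` -/
def Realizes {V : Type*} (d : V → ℕ) (succ : V → ℕ → V) (p : V → V → ℝ) : Prop :=
  (∀ u, 0 < d u) ∧
  ∀ u v, p u v = ((Finset.range (d u)).filter fun i => succ u i = v).card / d u

open Finset Function

section Periodic

lemma Finset.abs_sum_le_half_sum_abs_of_sum_eq_zero {ι K : Type*} [Field K] [LinearOrder K]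
    [IsStrictOrderedRing K] [DecidableEq ι] {s t : Finset ι} {b : ι → K} (hts : t ⊆ s)
    (h0 : ∑ i ∈ s, b i = 0) : |∑ i ∈ t, b i| ≤ (1 / 2) * ∑ i ∈ s, |b i| := by
  have hsplit := sum_sdiff hts (f := b)
  have hsplit_abs := sum_sdiff hts (f := fun i => |b i|)
  have hcompl : |∑ i ∈ t, b i| = |∑ i ∈ s \ t, b i| := by
    rw [← abs_neg, show -∑ i ∈ t, b i = ∑ i ∈ s \ t, b i by linear_combination -hsplit - h0]
  have h₁ := abs_sum_le_sum_abs b t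
  have h₂ := abs_sum_le_sum_abs b (s \ t)
  linarith

variable {M : Type*} [AddCommMonoid M]

lemma Function.Periodic.sum_range_shift {b : ℕ → M} {d : ℕ} (hb : Periodic b d) (c : ℕ) :
    ∑ k ∈ range d, b (c + k) = ∑ k ∈ range d, b k := by
  induction c with
  | zero => simp
  | succ c ih =>
    rcases d with _ | d
    · simp
    rw [← ih, sum_range_succ, sum_range_succ']
    have hwrap : b (c + 1 + d) = b (c + 0) := by
      rw [show c + 1 + d = c + (d + 1) by ring, hb, add_zero]
    rw [hwrap]
    congr 1
    exact sum_congr rfl fun k _ => by rw [add_assoc, add_comm 1 k]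

lemma Finset.sum_range_comp_add_mod (g : ℕ → M) (c d : ℕ) :
    ∑ k ∈ range d, g ((c + k) % d) = ∑ k ∈ range d, g k := by
  have hperiodic : Periodic (fun j => g (j % d)) d := fun j => by simp
  rw [hperiodic.sum_range_shift c]
  exact sum_congr rfl fun k hk => by rw [Nat.mod_eq_of_lt (mem_range.mp hk)]

lemma Function.Periodic.sum_range_mod {G : Type*} [AddCommGroup G] {b : ℕ → G} {d : ℕ}
    (hb : Periodic b d) (h0 : ∑ k ∈ range d, b k = 0) (n : ℕ) :
    ∑ k ∈ range n, b k = ∑ k ∈ range (n % d), b k := by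
  conv_lhs => rw [← Nat.mod_add_div n d]
  induction n / d with
  | zero => simp
  | succ q ih => rw [Nat.mul_succ, ← add_assoc, sum_range_add, hb.sum_range_shift, h0, add_zero, ih]

lemma Function.Periodic.abs_sum_range_le {K : Type*} [Field K] [LinearOrder K]
    [IsStrictOrderedRing K] {b : ℕ → K} {d : ℕ} (hb : Periodic b d) (hd : 0 < d)
    (h0 : ∑ k ∈ range d, b k = 0) (n : ℕ) :
    |∑ k ∈ range n, b k| ≤ (1 / 2) * ∑ k ∈ range d, |b k| := by
  rw [hb.sum_range_mod h0]
  exact abs_sum_le_half_sum_abs_of_sum_eq_zero (range_subset_range.mpr (Nat.mod_lt n hd).le) h0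

end Periodic

section RotorWalk

variable {V : Type*} {d : V → ℕ} {succ : V → ℕ → V} {p : V → V → ℝ}

lemma Realizes.nonneg (hreal : Realizes d succ p) (u v : V) : 0 ≤ p u v := by
  rw [hreal.2]
  positivity

lemma Realizes.sum_succ_eq (hreal : Realizes d succ p) (w : V → ℝ) (u : V) :
    ∑ i ∈ range (d u), w (succ u i) = d u * ∑' v, p u v * w v := by
  have hsupport : ∀ v ∉ (range (d u)).image (succ u), p u v * w v = 0 := by
    intro v hv
    rw [hreal.2, filter_eq_empty_iff.mpr fun i hi hiv => hv (mem_image.mpr ⟨i, hi, hiv⟩)]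
    simp
  rw [tsum_eq_sum hsupport, sum_comp, mul_sum]
  refine sum_congr rfl fun v _ => ?_
  rw [hreal.2, nsmul_eq_mul]
  field_simp [(hreal.1 u).ne']

lemma nvisits_succ (x : ℕ → V) (t : ℕ) (v : V) :
    nvisits x (t + 1) v = nvisits x t v + if x t = v then 1 else 0 := by
  unfold nvisits
  rw [range_add_one, filter_insert]
  split
  · rw [card_insert_of_notMem fun h => by simpa using (mem_filter.mp h).1]
  · rw [add_zero]

lemma sum_filter_eq_sum_range_nvisits {M : Type*} [AddCommMonoid M] (x : ℕ → V) (u : V)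
    (g : ℕ → M) (t : ℕ) :
    ∑ s ∈ range t with x s = u, g (nvisits x s u) = ∑ k ∈ range (nvisits x t u), g k := by
  induction t with
  | zero => simp [nvisits]
  | succ t ih =>
    rw [range_add_one, filter_insert, nvisits_succ]
    by_cases h : x t = u
    · rw [if_pos h, sum_insert fun hc => by simpa using (mem_filter.mp hc).1, ih, if_pos h,
        sum_range_succ, add_comm]
    · rw [if_neg h, ih, if_neg h, add_zero]

variable {x : ℕ → V} {r : ℕ → V → ℕ}

lemma IsRotorWalk.rotor_eq (hwalk : IsRotorWalk d succ x r) (s : ℕ) (v : V) :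
    r s v = (r 0 v + nvisits x s v) % d v := by
  obtain ⟨hr₀, hturn, hfix, -⟩ := hwalk
  induction s with
  | zero => simp [nvisits, Nat.mod_eq_of_lt (hr₀ v)]
  | succ s ih =>
    by_cases h : v = x s
    · subst h
      rw [hturn s, ih, Nat.mod_add_mod, nvisits_succ, if_pos rfl, add_assoc]
    · rw [hfix s v h, ih, nvisits_succ, if_neg (Ne.symm h), add_zero]

lemma IsRotorWalk.next_eq (hwalk : IsRotorWalk d succ x r) (s : ℕ) :
    x (s + 1) = succ (x s) ((r 0 (x s) + 1 + nvisits x s (x s)) % d (x s)) := by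
  rw [hwalk.2.2.2 s, hwalk.2.1 s, hwalk.rotor_eq s, Nat.mod_add_mod, add_right_comm]

lemma IsRotorWalk.abs_sum_exits_le (hwalk : IsRotorWalk d succ x r) (u : V) (h : V → ℝ)
    (h0 : ∑ i ∈ range (d u), h (succ u i) = 0) (t : ℕ) :
    |∑ s ∈ range t with x s = u, h (x (s + 1))| ≤
      (1 / 2) * ∑ i ∈ range (d u), |h (succ u i)| := by
  set b : ℕ → ℝ := fun k => h (succ u ((r 0 u + 1 + k) % d u))
  have hexit : ∑ s ∈ range t with x s = u, h (x (s + 1)) = ∑ k ∈ range (nvisits x t u), b k := by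
    rw [← sum_filter_eq_sum_range_nvisits]
    refine sum_congr rfl fun s hs => ?_
    rw [hwalk.next_eq, (mem_filter.mp hs).2]
  have hb : Periodic b (d u) := fun k => by
    simp only [b, ← add_assoc, Nat.add_mod_right]
  have hshift := sum_range_comp_add_mod (fun i => h (succ u i)) (r 0 u + 1) (d u)
  have hshift_abs := sum_range_comp_add_mod (fun i => |h (succ u i)|) (r 0 u + 1) (d u)
  rw [hexit, ← hshift_abs]
  exact hb.abs_sum_range_le (Nat.zero_lt_of_lt (hwalk.1 u)) (hshift.trans h0) _

lemma IsRotorWalk.abs_sum_exits_sub_mean_le (hreal : Realizes d succ p)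
    (hwalk : IsRotorWalk d succ x r) (f : V → ℝ) (u : V) (t : ℕ) :
    |∑ s ∈ range t with x s = u, ((∑' v, p u v * f v) - f (x (s + 1)))| ≤
      (1 / 2) * ∑' v, (d u : ℝ) * p u v * |(∑' v, p u v * f v) - f v| := by
  set mean := ∑' v, p u v * f v
  have h0 : ∑ i ∈ range (d u), (mean - f (succ u i)) = 0 := by
    rw [sum_sub_distrib, hreal.sum_succ_eq]
    simp [mean]
  convert hwalk.abs_sum_exits_le u (fun v => mean - f v) h0 t using 2
  rw [hreal.sum_succ_eq (fun v => |mean - f v|), ← tsum_mul_left]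
  simp only [mul_assoc]

end RotorWalk

lemma sum_tsum_le_tsum_prod {β γ : Type*} {g : β × γ → ℝ} (hg : ∀ bc, 0 ≤ g bc)
    (hsum : Summable g) (s : Finset β) : ∑ b ∈ s, ∑' c, g (b, c) ≤ ∑' bc, g bc := by
  rw [hsum.tsum_prod]
  exact hsum.prod.sum_le_tsum s fun b _ => tsum_nonneg fun c => hg (b, c)

theorem key_bound_general {V : Type*}
    (d : V → ℕ) (succ : V → ℕ → V) (p : V → V → ℝ)
    (hreal : Realizes d succ p)
    (x : ℕ → V) (r : ℕ → V → ℕ) (hwalk : IsRotorWalk d succ x r)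
    (f : V → ℝ)
    (Δ : V → ℝ) (hΔ : ∀ u, Δ u = (∑' v, p u v * f v) - f u)
    (hsum : Summable fun uv : V × V =>
      (d uv.1 : ℝ) * p uv.1 uv.2 * |f uv.1 - f uv.2 + Δ uv.1|)
    (t : ℕ) :
    |∑ s ∈ Finset.range t, Δ (x s)| ≤
      |f (x t) - f (x 0)| +
        (1 / 2) * ∑' uv : V × V,
          (d uv.1 : ℝ) * p uv.1 uv.2 * |f uv.1 - f uv.2 + Δ uv.1| := by
  set Pf : V → ℝ := fun u => ∑' v, p u v * f v
  have hdev : ∀ u v, f u - f v + Δ u = Pf u - f v := fun u v => by rw [hΔ]; ring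
  simp only [hdev] at hsum ⊢
  have htel : ∑ s ∈ range t, Δ (x s)
      = (f (x t) - f (x 0)) + ∑ s ∈ range t, (Pf (x s) - f (x (s + 1))) := by
    rw [← sum_range_sub (fun s => f (x s)), ← sum_add_distrib]
    exact sum_congr rfl fun s _ => by rw [hΔ]; ring
  have hgroup : ∑ s ∈ range t, (Pf (x s) - f (x (s + 1)))
      = ∑ u ∈ (range t).image x, ∑ s ∈ range t with x s = u, (Pf u - f (x (s + 1))) := by
    rw [← sum_fiberwise_of_maps_to fun s hs => mem_image_of_mem x hs]
    exact sum_congr rfl fun u _ => sum_congr rfl fun s hs => by rw [(mem_filter.mp hs).2]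
  have hnonneg : ∀ uv : V × V, 0 ≤ (d uv.1 : ℝ) * p uv.1 uv.2 * |Pf uv.1 - f uv.2| :=
    fun uv => by have := hreal.nonneg uv.1 uv.2; positivity
  calc |∑ s ∈ range t, Δ (x s)|
      = |(f (x t) - f (x 0)) + ∑ u ∈ (range t).image x,
          ∑ s ∈ range t with x s = u, (Pf u - f (x (s + 1)))| := by rw [htel, hgroup]
    _ ≤ |f (x t) - f (x 0)| + ∑ u ∈ (range t).image x,
          |∑ s ∈ range t with x s = u, (Pf u - f (x (s + 1)))| :=
        (abs_add_le _ _).trans (by gcongr; exact abs_sum_le_sum_abs _ _)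
    _ ≤ |f (x t) - f (x 0)| + ∑ u ∈ (range t).image x,
          (1 / 2) * ∑' v, (d u : ℝ) * p u v * |Pf u - f v| := by
        gcongr with u
        exact hwalk.abs_sum_exits_sub_mean_le hreal f u t
    _ ≤ _ := by rw [← mul_sum]; gcongr; exact sum_tsum_le_tsum_prod hnonneg hsum _

/-- **Key bound** (Proposition `key`).  For any rotor walk associated with the kernel
`p`, any bounded `f`, and any time `t`,
`|∑_{s<t} Δf(x_s)| ≤ |f(x_t) - f(x_0)| + (1/2) ∑_{u,v} d(u) p(u,v) |f(u) - f(v) + Δf(u)|`. -/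
theorem key_bound {V : Type*} [Countable V]
    (d : V → ℕ) (succ : V → ℕ → V) (p : V → V → ℝ)
    (hreal : Realizes d succ p)
    (x : ℕ → V) (r : ℕ → V → ℕ) (hwalk : IsRotorWalk d succ x r)
    (f : V → ℝ) (hf : ∃ Mf : ℝ, ∀ v, |f v| ≤ Mf)
    (Δ : V → ℝ) (hΔ : ∀ u, Δ u = (∑' v, p u v * f v) - f u)
    (hsum : Summable fun uv : V × V =>
      (d uv.1 : ℝ) * p uv.1 uv.2 * |f uv.1 - f uv.2 + Δ uv.1|)
    (t : ℕ) :
    |∑ s ∈ Finset.range t, Δ (x s)| ≤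
      |f (x t) - f (x 0)| +
        (1 / 2) * ∑' uv : V × V,
          (d uv.1 : ℝ) * p uv.1 uv.2 * |f uv.1 - f uv.2 + Δ uv.1| :=
  key_bound_general d succ p hreal x r hwalk f Δ hΔ hsum t
end

section
/- Let b,c be distinct vertices of an irreducible recurrent Markov chain with stationary vector pi. Then pi(b) e_{b,c} = pi(c) e_{c,b}, where e_{u,v} = P_u(T_v < T_u^+). Moreover, the hitting probability h = h_{b,c} satisfies Delta h(b) = -e_{b,c} and Delta h(c) = e_{c,b}. -/
open scoped BigOperators Classical

/-- `hitAux p b c t v` is the probability, for the Markov chain with kernel `p`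
started at `v`, of hitting `b` before hitting `c` and within `t` steps. -/
noncomputable def hitAux {V : Type*} (p : V → V → ℝ) (b c : V) : ℕ → V → ℝ
  | 0, v => if v = b then 1 else 0
  | t + 1, v => if v = b then 1 else if v = c then 0 else ∑' w, p v w * hitAux p b c t w

/-- the hitting probability `h_{b,c}(v) = P_v(T_b < T_c)`, as the monotone limit of the
probabilities of hitting `b` before `c` within `t` steps.  (Taking `b = c` gives the
single-target hitting probability `P_v(T_b < ∞)`.) -/
noncomputable def hitProb {V : Type*} (p : V → V → ℝ) (b c : V) (v : V) : ℝ :=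
  ⨆ t, hitAux p b c t v

/-- the escape probability `e_{u,v} = P_u(T_v < T_u^+)`: a first step from `u` to `w`,
then hit `v` before `u`. -/
noncomputable def escProb {V : Type*} (p : V → V → ℝ) (u v : V) : ℝ :=
  ∑' w, p u w * hitProb p v u w

/-- irreducibility of the kernel: any vertex can be reached from any other by a path of
positive-probability steps -/
def IrreducibleKernel {V : Type*} (p : V → V → ℝ) : Prop :=
  ∀ u v : V, ∃ (n : ℕ) (f : ℕ → V), f 0 = u ∧ f n = v ∧ ∀ i < n, 0 < p (f i) (f (i + 1))

/-- recurrence: `P_v(T_v^+ < ∞) = 1` for every `v` -/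
def RecurrentKernel {V : Type*} (p : V → V → ℝ) : Prop :=
  ∀ v : V, ∑' w, p v w * hitProb p v v w = 1

/-- `p` is a Markov transition kernel with finitely many successors at each vertex -/
def IsKernel {V : Type*} (p : V → V → ℝ) : Prop :=
  (∀ u v, 0 ≤ p u v) ∧ (∀ u, HasSum (p u) 1) ∧ ∀ u, (Function.support (p u)).Finite


/-! Recurrence and irreducibility give `h_{b,c} + h_{c,b} = 1`, so for `h = h_{b,c}` we have
`e_{b,c} = 1 - (P h)(b)` and `e_{c,b} = (P h)(c)`, which are the two Laplacian identities.
For the balance identity, the stationary mass of the truncated hitting probabilities `h_t`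
shows `π b (P h_t)(b) + π c (P h_t)(c) ≤ π b`, i.e. `π c e_{c,b} ≤ π b e_{b,c}` in the limit;
exchanging `b` and `c` gives the reverse inequality. -/

open Filter Topology
open scoped ENNReal

namespace IsKernel

variable {V : Type*} {p : V → V → ℝ} (hker : IsKernel p)
include hker

theorem summable_mul (u : V) (f : V → ℝ) : Summable fun w => p u w * f w :=
  summable_of_hasFiniteSupport <|
    (hker.2.2 u).subset (Function.support_mul_subset_left (p u) f)

theorem tsum_mul_const (u : V) (a : ℝ) : ∑' w, p u w * a = a := by
  rw [tsum_mul_right, (hker.2.1 u).tsum_eq, one_mul]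

theorem tsum_mul_add (u : V) (f g : V → ℝ) :
    ∑' w, p u w * (f w + g w) = ∑' w, p u w * f w + ∑' w, p u w * g w := by
  simp_rw [mul_add]
  exact (hker.summable_mul u f).tsum_add (hker.summable_mul u g)

theorem tsum_mul_one_sub (u : V) (f : V → ℝ) :
    ∑' w, p u w * (1 - f w) = 1 - ∑' w, p u w * f w := by
  simp_rw [mul_sub]
  rw [(hker.summable_mul u fun _ => 1).tsum_sub (hker.summable_mul u f)]
  simpa using congrArg (· - ∑' w, p u w * f w) (hker.tsum_mul_const u 1)

theorem tsum_mul_le_tsum_mul {f g : V → ℝ} (hfg : ∀ w, f w ≤ g w) (u : V) :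
    ∑' w, p u w * f w ≤ ∑' w, p u w * g w :=
  (hker.summable_mul u f).tsum_le_tsum (fun w => mul_le_mul_of_nonneg_left (hfg w) (hker.1 u w))
    (hker.summable_mul u g)

theorem tsum_mul_nonneg {f : V → ℝ} (hf : ∀ w, 0 ≤ f w) (u : V) : 0 ≤ ∑' w, p u w * f w :=
  tsum_nonneg fun w => mul_nonneg (hker.1 u w) (hf w)

theorem tsum_mul_le_one {f : V → ℝ} (hf : ∀ w, f w ≤ 1) (u : V) : ∑' w, p u w * f w ≤ 1 :=
  (hker.tsum_mul_le_tsum_mul hf u).trans_eq (hker.tsum_mul_const u 1)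

theorem eq_one_of_tsum_mul_eq_one {f : V → ℝ} (hf : ∀ w, f w ≤ 1) {u : V}
    (hu : ∑' w, p u w * f w = 1) {w : V} (hw : 0 < p u w) : f w = 1 := by
  have hdefect : ∑' x, p u x * (1 - f x) = 0 := by rw [hker.tsum_mul_one_sub, hu, sub_self]
  have hterm : p u w * (1 - f w) ≤ 0 :=
    hdefect ▸ (hker.summable_mul u fun x => 1 - f x).le_tsum w
      fun x _ => mul_nonneg (hker.1 u x) (sub_nonneg.2 (hf x))
  nlinarith [hf w]

theorem tendsto_tsum_mul {ι : Type*} {l : Filter ι} {F : ι → V → ℝ} {f : V → ℝ}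
    (hF : ∀ w, Tendsto (fun i => F i w) l (𝓝 (f w))) (u : V) :
    Tendsto (fun i => ∑' w, p u w * F i w) l (𝓝 (∑' w, p u w * f w)) := by
  have hsum : ∀ g : V → ℝ, ∑' w, p u w * g w = ∑ w ∈ (hker.2.2 u).toFinset, p u w * g w :=
    fun g => tsum_eq_sum fun w hw => by simp_all
  simp_rw [hsum]
  exact tendsto_finsetSum _ fun w _ => (hF w).const_mul _

theorem ofReal_tsum_mul (u : V) {f : V → ℝ} (hf : ∀ w, 0 ≤ f w) :
    ENNReal.ofReal (∑' w, p u w * f w) = ∑' w, ENNReal.ofReal (p u w) * ENNReal.ofReal (f w) := by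
  rw [ENNReal.ofReal_tsum_of_nonneg (fun w => mul_nonneg (hker.1 u w) (hf w))
    (hker.summable_mul u f)]
  exact tsum_congr fun w => ENNReal.ofReal_mul (hker.1 u w)

end IsKernel

section Hitting

variable {V : Type*} {p : V → V → ℝ} (b c : V)

theorem hitAux_self (t : ℕ) : hitAux p b c t b = 1 := by
  cases t <;> simp [hitAux]

theorem hitAux_of_ne {b c : V} (hcb : c ≠ b) (t : ℕ) : hitAux p b c t c = 0 := by
  cases t <;> simp [hitAux, hcb]

theorem hitProb_self : hitProb p b c b = 1 := by
  simp [hitProb, hitAux_self]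

theorem hitProb_of_ne {b c : V} (hcb : c ≠ b) : hitProb p b c c = 0 := by
  simp [hitProb, hitAux_of_ne hcb]

variable {b c} (hker : IsKernel p)
include hker

theorem hitAux_nonneg (t : ℕ) (v : V) : 0 ≤ hitAux p b c t v := by
  induction t generalizing v with
  | zero => rw [hitAux]; split_ifs <;> norm_num
  | succ t ih => rw [hitAux]; split_ifs <;> first | exact hker.tsum_mul_nonneg ih v | norm_num

theorem hitAux_le_one (t : ℕ) (v : V) : hitAux p b c t v ≤ 1 := by
  induction t generalizing v with
  | zero => rw [hitAux]; split_ifs <;> norm_num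
  | succ t ih => rw [hitAux]; split_ifs <;> first | exact hker.tsum_mul_le_one ih v | norm_num

theorem hitAux_le_succ (t : ℕ) (v : V) : hitAux p b c t v ≤ hitAux p b c (t + 1) v := by
  induction t generalizing v with
  | zero =>
    rw [hitAux, hitAux]
    split_ifs <;> first | exact hker.tsum_mul_nonneg (hitAux_nonneg hker 0) v | norm_num
  | succ t ih =>
    rw [hitAux, hitAux]
    split_ifs <;> first | rfl | exact hker.tsum_mul_le_tsum_mul ih v

theorem tendsto_hitAux (v : V) :
    Tendsto (fun t => hitAux p b c t v) atTop (𝓝 (hitProb p b c v)) :=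
  tendsto_atTop_ciSup (monotone_nat_of_le_succ fun t => hitAux_le_succ hker t v)
    ⟨1, by rintro _ ⟨t, rfl⟩; exact hitAux_le_one hker t v⟩

theorem hitProb_le_one (v : V) : hitProb p b c v ≤ 1 :=
  le_of_tendsto' (tendsto_hitAux hker v) fun t => hitAux_le_one hker t v

theorem hitProb_eq_tsum {v : V} (hvb : v ≠ b) (hvc : v ≠ c) :
    hitProb p b c v = ∑' w, p v w * hitProb p b c w := by
  have hshift := (tendsto_hitAux (b := b) (c := c) hker v).comp (tendsto_add_atTop_nat 1)
  simp only [Function.comp_def, hitAux, if_neg hvb, if_neg hvc] at hshift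
  exact tendsto_nhds_unique hshift (hker.tendsto_tsum_mul (tendsto_hitAux hker) v)

theorem hitAux_add_hitAux_swap_le_one {b c : V} (hbc : b ≠ c) (t : ℕ) (v : V) :
    hitAux p b c t v + hitAux p c b t v ≤ 1 := by
  induction t generalizing v with
  | zero =>
    simp only [hitAux]
    split_ifs <;> simp_all
  | succ t ih =>
    rw [hitAux, hitAux]
    split_ifs <;> first | (rw [← hker.tsum_mul_add]; exact hker.tsum_mul_le_one ih v) | simp_all

theorem hitAux_self_le_add {b c : V} (hbc : b ≠ c) (t : ℕ) (v : V) :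
    hitAux p b b t v ≤ hitAux p b c t v + hitAux p c b t v := by
  induction t generalizing v with
  | zero => simp only [hitAux]; split_ifs <;> simp_all
  | succ t ih =>
    by_cases hvc : v = c
    · subst hvc
      rw [hitAux_self, hitAux_of_ne hbc.symm, zero_add]
      exact hitAux_le_one hker _ _
    rw [hitAux, hitAux, hitAux]
    split_ifs <;>
      first | (rw [← hker.tsum_mul_add]; exact hker.tsum_mul_le_tsum_mul ih v) | simp_all

end Hitting

section Recurrence

variable {V : Type*} {p : V → V → ℝ} (hker : IsKernel p) (hirr : IrreducibleKernel p)
  (hrec : RecurrentKernel p)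
include hker hirr hrec

theorem hitProb_self_eq_one (b v : V) : hitProb p b b v = 1 := by
  have hstep : ∀ x y, hitProb p b b x = 1 → 0 < p x y → hitProb p b b y = 1 := by
    intro x y hx hxy
    refine hker.eq_one_of_tsum_mul_eq_one (hitProb_le_one hker) ?_ hxy
    by_cases hxb : x = b
    · exact hxb ▸ hrec b
    · rw [← hitProb_eq_tsum hker hxb hxb, hx]
  obtain ⟨n, f, hf0, hfn, hpath⟩ := hirr b v
  have hprefix : ∀ i ≤ n, hitProb p b b (f i) = 1 := by
    intro i hi
    induction i with
    | zero => rw [hf0, hitProb_self]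
    | succ i ih => exact hstep _ _ (ih (by omega)) (hpath i (by omega))
  exact hfn ▸ hprefix n le_rfl

theorem hitProb_add_hitProb_swap {b c : V} (hbc : b ≠ c) (v : V) :
    hitProb p b c v + hitProb p c b v = 1 := by
  have hsum :=
    (tendsto_hitAux (b := b) (c := c) hker v).add (tendsto_hitAux (b := c) (c := b) hker v)
  refine le_antisymm (le_of_tendsto' hsum fun t => hitAux_add_hitAux_swap_le_one hker hbc t v) ?_
  rw [← hitProb_self_eq_one hker hirr hrec b v]
  exact le_of_tendsto_of_tendsto' (tendsto_hitAux hker v) hsum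
    fun t => hitAux_self_le_add hker hbc t v

theorem escProb_eq_one_sub {b c : V} (hbc : b ≠ c) :
    escProb p b c = 1 - ∑' w, p b w * hitProb p b c w := by
  rw [escProb, ← hker.tsum_mul_one_sub]
  exact tsum_congr fun w => by
    rw [← hitProb_add_hitProb_swap hker hirr hrec hbc w, add_sub_cancel_left]

end Recurrence

section StationaryFlux

variable {V : Type*} {P : V → V → ℝ≥0∞} {m : V → ℝ≥0∞}

theorem tsum_mul_tsum_mul_of_stationary (hm : ∀ w, ∑' v, m v * P v w = m w) (g : V → ℝ≥0∞) :
    ∑' v, m v * ∑' w, P v w * g w = ∑' w, m w * g w := by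
  simp_rw [← ENNReal.tsum_mul_left, ← mul_assoc]
  rw [ENNReal.tsum_comm]
  simp_rw [ENNReal.tsum_mul_right, hm]

theorem ENNReal.tsum_eq_add_add_tsum_ite {b c : V} (hbc : b ≠ c) (f : V → ℝ≥0∞) :
    ∑' v, f v = f b + f c + ∑' v, if v = b ∨ v = c then 0 else f v := by
  rw [ENNReal.tsum_eq_add_tsum_ite b, ENNReal.tsum_eq_add_tsum_ite c, if_neg hbc.symm, add_assoc]
  congr 3 with v
  by_cases hvb : v = b <;> by_cases hvc : v = c <;> simp [hvb, hvc]

variable {b c : V} {H : ℕ → V → ℝ≥0∞} (h0 : ∀ v, H 0 v = if v = b then 1 else 0)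
  (hsucc : ∀ t v, H (t + 1) v = if v = b then 1 else if v = c then 0 else ∑' w, P v w * H t w)
include h0 hsucc

theorem le_succ_of_hitting_recursion (t : ℕ) (v : V) : H t v ≤ H (t + 1) v := by
  induction t generalizing v with
  | zero => rw [h0, hsucc]; split_ifs <;> simp
  | succ t ih => rw [hsucc, hsucc]; split_ifs <;> first | rfl | gcongr with w; exact ih w

/-- Stationarity turns `S t = ∑ m v * H t v` into `m b (P H_t)(b) + m c (P H_t)(c) + R t`, and the
recursion turns `S (t + 1)` into `m b + R t`. So `S` grows by at most `m b` per step and stays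
finite, which lets `S t ≤ S (t + 1)` be cancelled down to the claim. -/
theorem boundary_flux_le (hm : ∀ w, ∑' v, m v * P v w = m w) (hbc : b ≠ c) (hmb : m b ≠ ∞)
    (t : ℕ) : m b * ∑' w, P b w * H t w + m c * ∑' w, P c w * H t w ≤ m b := by
  set S : ℕ → ℝ≥0∞ := fun t => ∑' v, m v * H t v
  set R : ℕ → ℝ≥0∞ := fun t => ∑' v, if v = b ∨ v = c then 0 else m v * ∑' w, P v w * H t w
  have hS : ∀ t, S t = m b * ∑' w, P b w * H t w + m c * ∑' w, P c w * H t w + R t := fun t => by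
    simp only [S, R]
    rw [← tsum_mul_tsum_mul_of_stationary hm, ENNReal.tsum_eq_add_add_tsum_ite hbc]
  have hS_succ : ∀ t, S (t + 1) = m b + R t := fun t => by
    simp only [S, R]
    rw [ENNReal.tsum_eq_add_add_tsum_ite hbc, hsucc, hsucc, if_pos rfl, if_neg hbc.symm,
      if_pos rfl, mul_one, mul_zero, add_zero]
    refine congrArg (m b + ·) (tsum_congr fun v => ?_)
    split_ifs <;> simp_all
  have hR_le : ∀ t, R t ≤ S t := fun t => (hS t).symm ▸ le_add_self
  have hS_ne_top : ∀ t, S t ≠ ∞ := by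
    intro t
    induction t with
    | zero => simp [S, h0, hmb]
    | succ t ih => rw [hS_succ]; exact ENNReal.add_ne_top.2 ⟨hmb, ne_top_of_le_ne_top ih (hR_le t)⟩
  have hmono : S t ≤ S (t + 1) :=
    ENNReal.tsum_le_tsum fun v => by gcongr; exact le_succ_of_hitting_recursion h0 hsucc t v
  rw [hS, hS_succ] at hmono
  exact (ENNReal.add_le_add_iff_right (ne_top_of_le_ne_top (hS_ne_top t) (hR_le t))).1 hmono

end StationaryFlux

section Escape

variable {V : Type*} {p : V → V → ℝ} (hker : IsKernel p) {π : V → ℝ} (hπ0 : ∀ v, 0 ≤ π v)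
  (hπ : ∀ v, HasSum (fun u => π u * p u v) (π v))
include hker hπ0 hπ

theorem mul_tsum_hitAux_add_le {b c : V} (hbc : b ≠ c) (t : ℕ) :
    π b * ∑' w, p b w * hitAux p b c t w + π c * ∑' w, p c w * hitAux p b c t w ≤ π b := by
  have hm : ∀ w, ∑' v, ENNReal.ofReal (π v) * ENNReal.ofReal (p v w) = ENNReal.ofReal (π w) :=
    fun w => by
      simp_rw [← ENNReal.ofReal_mul (hπ0 _)]
      rw [← ENNReal.ofReal_tsum_of_nonneg (fun v => mul_nonneg (hπ0 v) (hker.1 v w))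
        (hπ w).summable, (hπ w).tsum_eq]
  have key := boundary_flux_le (H := fun t v => ENNReal.ofReal (hitAux p b c t v))
    (fun v => by rw [hitAux]; split_ifs <;> simp)
    (fun t v => by
      rw [hitAux]
      split_ifs
      exacts [ENNReal.ofReal_one, ENNReal.ofReal_zero,
        hker.ofReal_tsum_mul v (hitAux_nonneg hker t)])
    hm hbc ENNReal.ofReal_ne_top t
  rwa [← hker.ofReal_tsum_mul b (hitAux_nonneg hker t),
    ← hker.ofReal_tsum_mul c (hitAux_nonneg hker t), ← ENNReal.ofReal_mul (hπ0 b),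
    ← ENNReal.ofReal_mul (hπ0 c),
    ← ENNReal.ofReal_add (mul_nonneg (hπ0 b) (hker.tsum_mul_nonneg (hitAux_nonneg hker t) b))
      (mul_nonneg (hπ0 c) (hker.tsum_mul_nonneg (hitAux_nonneg hker t) c)),
    ENNReal.ofReal_le_ofReal_iff (hπ0 b)] at key

theorem mul_escProb_le (hirr : IrreducibleKernel p) (hrec : RecurrentKernel p) {b c : V}
    (hbc : b ≠ c) : π c * escProb p c b ≤ π b * escProb p b c := by
  have hflux : π b * ∑' w, p b w * hitProb p b c w + π c * ∑' w, p c w * hitProb p b c w ≤ π b :=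
    le_of_tendsto' (((hker.tendsto_tsum_mul (tendsto_hitAux hker) b).const_mul (π b)).add
      ((hker.tendsto_tsum_mul (tendsto_hitAux hker) c).const_mul (π c)))
      (mul_tsum_hitAux_add_le hker hπ0 hπ hbc)
  rw [escProb_eq_one_sub hker hirr hrec hbc, escProb]
  linarith

end Escape

theorem escape_probability_identities_general {V : Type*}
    (p : V → V → ℝ) (hker : IsKernel p)
    (hirr : IrreducibleKernel p) (hrec : RecurrentKernel p)
    (π : V → ℝ) (hπpos : ∀ v, 0 < π v)
    (hπ : ∀ v, HasSum (fun u => π u * p u v) (π v))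
    (b c : V) (hbc : b ≠ c)
    (h : V → ℝ) (hh : h = hitProb p b c)
    (Δh : V → ℝ) (hΔ : ∀ u, Δh u = (∑' v, p u v * h v) - h u) :
    π b * escProb p b c = π c * escProb p c b ∧
    Δh b = -escProb p b c ∧ Δh c = escProb p c b := by
  subst hh
  have hπ0 : ∀ v, 0 ≤ π v := fun v => (hπpos v).le
  refine ⟨le_antisymm (mul_escProb_le hker hπ0 hπ hirr hrec hbc.symm)
    (mul_escProb_le hker hπ0 hπ hirr hrec hbc), ?_, ?_⟩
  · rw [hΔ, hitProb_self, escProb_eq_one_sub hker hirr hrec hbc]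
    ring
  · rw [hΔ, hitProb_of_ne hbc.symm, sub_zero, escProb]

/-- Lemma `escape`: `π(b) e_{b,c} = π(c) e_{c,b}`, and `Δh(b) = -e_{b,c}`,
`Δh(c) = e_{c,b}` for `h = h_{b,c}`. -/
theorem escape_probability_identities {V : Type*} [Countable V]
    (p : V → V → ℝ) (hker : IsKernel p)
    (hirr : IrreducibleKernel p) (hrec : RecurrentKernel p)
    (π : V → ℝ) (hπpos : ∀ v, 0 < π v)
    (hπ : ∀ v, HasSum (fun u => π u * p u v) (π v))
    (b c : V) (hbc : b ≠ c)
    (h : V → ℝ) (hh : h = hitProb p b c)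
    (Δh : V → ℝ) (hΔ : ∀ u, Δh u = (∑' v, p u v * h v) - h u) :
    π b * escProb p b c = π c * escProb p c b ∧
    Δh b = -escProb p b c ∧ Δh c = escProb p c b :=
  escape_probability_identities_general p hker hirr hrec π hπpos hπ b c hbc h hh Δh hΔ
end

section
/- For the rotor walk on Z^2 with anticlockwise rotors started from the spiral initial configuration (with b,c sinks returning to a), between any two times at which the walk enters a new layer partial B(k) = B(k) \ B(k-1), it must visit the starting vertex a at least once; and between any two consecutive visits to a, no vertex is visited more than 4 times. -/
open scoped BigOperators Classical

/-- the anticlockwise rotor mechanism on ℤ²: in `0`-based indexing, rotor value `j`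
points to `u^(j+1) = u + (cos ((j+1)π/2), sin ((j+1)π/2))`, i.e.
`j = 0` → North, `1` → West, `2` → South, `3` → East. -/
def succZ2 (u : ℤ × ℤ) (i : ℕ) : ℤ × ℤ :=
  match i % 4 with
  | 0 => (u.1, u.2 + 1)
  | 1 => (u.1 - 1, u.2)
  | 2 => (u.1, u.2 - 1)
  | _ => (u.1 + 1, u.2)

/-- `arg` with values in `[0, 2π)` -/
noncomputable def arg2 (z : ℂ) : ℝ :=
  if Complex.arg z < 0 then Complex.arg z + 2 * Real.pi else Complex.arg z

/-- the spiral initial rotor configuration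
`r((x,y)) = ⌊1/2 + (2/π) arg(x - 1/2, y - 1/2)⌋ mod 4`, translated to the `0`-based
indexing of `succZ2` (the paper's value `m ∈ {0,1,2,3}` denotes the rotor pointing to
`u^(m)` with `0 ≡ 4`, i.e. the `0`-based value `(m+3) % 4`). -/
noncomputable def spiralRotor (v : ℤ × ℤ) : ℕ :=
  ((⌊(1 : ℝ) / 2 + (2 / Real.pi) * arg2 ⟨(v.1 : ℝ) - 1 / 2, (v.2 : ℝ) - 1 / 2⟩⌋).toNat
    + 3) % 4

/-- degrees for the walk modified so that `b` and `c` are sent straight back to `a` -/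
def dMod (b c : ℤ × ℤ) : ℤ × ℤ → ℕ := fun u => if u = b ∨ u = c then 1 else 4

/-- successors for the modified walk: `b` and `c` send the particle straight to `a` -/
def succMod (a b c : ℤ × ℤ) : ℤ × ℤ → ℕ → ℤ × ℤ := fun u i =>
  if u = b ∨ u = c then a else succZ2 u i

/-- the spiral initial configuration, modified at the degree-one vertices `b, c` -/
noncomputable def rotInit (b c : ℤ × ℤ) : ℤ × ℤ → ℕ := fun v =>
  if v = b ∨ v = c then 0 else spiralRotor v

/-- `v ∈ B(k) = ((-k, k] ∩ ℤ)²` -/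
def inB (k : ℕ) (v : ℤ × ℤ) : Prop :=
  -(k : ℤ) < v.1 ∧ v.1 ≤ k ∧ -(k : ℤ) < v.2 ∧ v.2 ≤ k

/-- the walk enters a new layer at time `t`: for some `k ≥ 1`, `x_0, …, x_{t-1} ∈ B(k)`
but `x_t ∉ B(k)` -/
def entersNewLayer (x : ℕ → ℤ × ℤ) (t : ℕ) : Prop :=
  ∃ k : ℕ, 1 ≤ k ∧ (∀ s < t, inB k (x s)) ∧ ¬ inB k (x t)

/-!
Within an excursion from `a`, two entries into a vertex `v` along the same edge `w → v` with the
same rotor value at `w` force a full turn of the rotor at `w` in between: four visits to `w`,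
plus the one just before the first entry. Hence no vertex is visited five times: at the first
fifth visit to some `v`, two of the entries into `v` would share one of its four incoming edges,
and the tail of that edge would already have been visited five times.

If the walk entered two new layers during one excursion, the vertex `v` from which it leaves
`B(k)` the second time lies on the boundary of `B(k)` and was not visited before the excursion, so
its rotor has turned only from the spiral configuration. That configuration meets the outward
edges of a boundary vertex last, so leaving takes more visits to `v` than `v` has incoming edges
from inside `B(k)`, while the visits come in along distinct such edges.
-/

section Spiral

open Real Set

namespace Complex

variable {z : ℂ} {α : ℝ}

lemma le_arg_iff_of_sub_int_mul_pi_mem (k : ℤ) (hα : α - k * π ∈ Ioo (-(π / 2)) (π / 2))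
    (hz : arg z - k * π ∈ Ioo (-(π / 2)) (π / 2)) : α ≤ arg z ↔ Real.tan α ≤ z.im / z.re := by
  rw [← sub_le_sub_iff_right (k * π), ← Real.strictMonoOn_tan.le_iff_le hα hz,
    Real.tan_sub_int_mul_pi, Real.tan_sub_int_mul_pi, tan_arg]

lemma le_arg_iff_of_re_pos (hz : 0 < z.re) (hα : α ∈ Ioo (-(π / 2)) (π / 2)) :
    α ≤ arg z ↔ Real.tan α ≤ z.im / z.re :=
  le_arg_iff_of_sub_int_mul_pi_mem 0 (by simpa using hα)
    (by simpa using abs_lt.1 (abs_arg_lt_pi_div_two_iff.2 (Or.inl hz)))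

lemma le_arg_iff_of_re_neg_of_im_nonneg (hre : z.re < 0) (him : 0 ≤ z.im)
    (hα : α - π ∈ Ioo (-(π / 2)) (π / 2)) : α ≤ arg z ↔ Real.tan α ≤ z.im / z.re := by
  have h := abs_lt.1 (abs_arg_lt_pi_div_two_iff.2 (Or.inl (neg_pos.2 hre) : 0 < (-z).re ∨ _))
  rw [arg_neg_eq_arg_sub_pi_iff.2 (him.lt_or_eq.imp id fun h => ⟨h.symm, hre⟩)] at h
  exact le_arg_iff_of_sub_int_mul_pi_mem 1 (by simpa using hα) (by simpa using h)

lemma le_arg_iff_of_re_neg_of_im_neg (hre : z.re < 0) (him : z.im < 0)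
    (hα : α + π ∈ Ioo (-(π / 2)) (π / 2)) : α ≤ arg z ↔ Real.tan α ≤ z.im / z.re := by
  have h := abs_lt.1 (abs_arg_lt_pi_div_two_iff.2 (Or.inl (neg_pos.2 hre) : 0 < (-z).re ∨ _))
  rw [arg_neg_eq_arg_add_pi_of_im_neg him] at h
  exact le_arg_iff_of_sub_int_mul_pi_mem (-1) (by simpa using hα) (by simpa using h)

end Complex

lemma Real.tan_three_pi_div_four : tan (3 * π / 4) = -1 := by
  rw [show 3 * π / 4 = -(π / 4) + (1 : ℤ) * π by push_cast; ring, tan_add_int_mul_pi, tan_neg,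
    tan_pi_div_four]

lemma arg2_of_im_nonneg {z : ℂ} (h : 0 ≤ z.im) : arg2 z = Complex.arg z :=
  if_neg (not_lt.2 (Complex.arg_nonneg_iff.2 h))

lemma arg2_of_im_neg {z : ℂ} (h : z.im < 0) : arg2 z = Complex.arg z + 2 * π :=
  if_pos (Complex.arg_neg_iff.2 h)

lemma floor_half_add_two_div_pi_mul_eq {θ : ℝ} (n : ℤ) (h₁ : (2 * n - 1) * π / 4 ≤ θ)
    (h₂ : θ < (2 * n + 1) * π / 4) : ⌊1 / 2 + 2 / π * θ⌋ = n := by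
  have lower : (2 * n - 1) / 2 ≤ 2 / π * θ := by
    rw [div_mul_eq_mul_div, le_div_iff₀ pi_pos]; linarith
  have upper : 2 / π * θ < (2 * n + 1) / 2 := by
    rw [div_mul_eq_mul_div, div_lt_iff₀ pi_pos]; linarith
  rw [Int.floor_eq_iff]
  constructor <;> linarith

section Sectors

open Complex

variable {p q : ℝ}

lemma floor_spiral_of_north (h₁ : p ≤ q) (h₂ : -p < q) :
    ⌊1 / 2 + 2 / π * arg2 ⟨p, q⟩⌋ = 1 := by
  have hq : 0 < q := by linarith
  rw [arg2_of_im_nonneg hq.le]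
  have := pi_pos
  refine floor_half_add_two_div_pi_mul_eq 1 ?_ ?_ <;> push_cast
  · rcases le_or_gt p 0 with hp | hp
    · have : π / 2 ≤ arg ⟨p, q⟩ := by
        rw [← not_lt, arg_lt_pi_div_two_iff]
        simp [Complex.ext_iff, hp.not_gt, hq.not_gt, hq.ne']
      linarith
    · have := (le_arg_iff_of_re_pos (z := ⟨p, q⟩) (α := π / 4) hp
        ⟨by linarith, by linarith⟩).2 (by rw [tan_pi_div_four]; exact (one_le_div hp).2 h₁)
      linarith
  · rcases le_or_gt 0 p with hp | hp
    · linarith [arg_le_pi_div_two_iff.2 (Or.inl hp : 0 ≤ (⟨p, q⟩ : ℂ).re ∨ _)]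
    · refine lt_of_not_ge fun h => ?_
      have := (le_arg_iff_of_re_neg_of_im_nonneg (z := ⟨p, q⟩) (α := 3 * π / 4) hp hq.le
        ⟨by linarith, by linarith⟩).1 (by linarith)
      rw [tan_three_pi_div_four, le_div_iff_of_neg hp] at this
      linarith

lemma floor_spiral_of_west (h₁ : p < q) (h₂ : q ≤ -p) :
    ⌊1 / 2 + 2 / π * arg2 ⟨p, q⟩⌋ = 2 := by
  have hp : p < 0 := by linarith
  have := pi_pos
  rcases le_or_gt 0 q with hq | hq
  · rw [arg2_of_im_nonneg hq]
    refine floor_half_add_two_div_pi_mul_eq 2 ?_ ?_ <;> push_cast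
    · have := (le_arg_iff_of_re_neg_of_im_nonneg (z := ⟨p, q⟩) (α := 3 * π / 4) hp hq
        ⟨by linarith, by linarith⟩).2
        (by rw [tan_three_pi_div_four, le_div_iff_of_neg hp]; change q ≤ _; linarith)
      linarith
    · linarith [arg_le_pi (⟨p, q⟩ : ℂ)]
  · rw [arg2_of_im_neg hq]
    refine floor_half_add_two_div_pi_mul_eq 2 ?_ ?_ <;> push_cast
    · linarith [neg_pi_lt_arg (⟨p, q⟩ : ℂ)]
    · refine lt_of_not_ge fun h => ?_
      have := (le_arg_iff_of_re_neg_of_im_neg (z := ⟨p, q⟩) (α := -(3 * π / 4)) hp hq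
        ⟨by linarith, by linarith⟩).1 (by linarith)
      rw [Real.tan_neg, tan_three_pi_div_four, neg_neg, one_le_div_of_neg hp] at this
      exact h₁.not_ge this

lemma floor_spiral_of_south (h₁ : q ≤ p) (h₂ : p < -q) :
    ⌊1 / 2 + 2 / π * arg2 ⟨p, q⟩⌋ = 3 := by
  have hq : q < 0 := by linarith
  rw [arg2_of_im_neg hq]
  have := pi_pos
  refine floor_half_add_two_div_pi_mul_eq 3 ?_ ?_ <;> push_cast
  · rcases le_or_gt 0 p with hp | hp
    · linarith [neg_pi_div_two_le_arg_iff.2 (Or.inl hp : 0 ≤ (⟨p, q⟩ : ℂ).re ∨ _)]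
    · have := (le_arg_iff_of_re_neg_of_im_neg (z := ⟨p, q⟩) (α := -(3 * π / 4)) hp hq
        ⟨by linarith, by linarith⟩).2
        (by rw [Real.tan_neg, tan_three_pi_div_four, neg_neg, one_le_div_of_neg hp]; exact h₁)
      linarith
  · rcases le_or_gt p 0 with hp | hp
    · have : arg ⟨p, q⟩ ≤ -(π / 2) := by
        rw [← not_lt, neg_pi_div_two_lt_arg_iff]
        simp [hp.not_gt, hq]
      linarith
    · refine lt_of_not_ge fun h => ?_
      have := (le_arg_iff_of_re_pos (z := ⟨p, q⟩) (α := -(π / 4)) hp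
        ⟨by linarith, by linarith⟩).1 (by linarith)
      rw [Real.tan_neg, tan_pi_div_four, le_div_iff₀ hp] at this
      change -1 * p ≤ q at this
      linarith

lemma floor_spiral_of_east (h₁ : -p ≤ q) (h₂ : q < p) :
    ⌊1 / 2 + 2 / π * arg2 ⟨p, q⟩⌋ = 0 ∨ ⌊1 / 2 + 2 / π * arg2 ⟨p, q⟩⌋ = 4 := by
  have hp : 0 < p := by linarith
  have := pi_pos
  have upper : arg ⟨p, q⟩ < π / 4 := by
    refine lt_of_not_ge fun h => ?_
    have := (le_arg_iff_of_re_pos (z := ⟨p, q⟩) (α := π / 4) hp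
      ⟨by linarith, by linarith⟩).1 h
    rw [tan_pi_div_four, one_le_div hp] at this
    exact h₂.not_ge this
  rcases le_or_gt 0 q with hq | hq
  · left
    rw [arg2_of_im_nonneg hq]
    refine floor_half_add_two_div_pi_mul_eq 0 ?_ ?_ <;> push_cast
    · linarith [(arg_nonneg_iff (z := ⟨p, q⟩)).2 hq]
    · linarith
  · right
    rw [arg2_of_im_neg hq]
    refine floor_half_add_two_div_pi_mul_eq 4 ?_ ?_ <;> push_cast
    · have := (le_arg_iff_of_re_pos (z := ⟨p, q⟩) (α := -(π / 4)) hp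
        ⟨by linarith, by linarith⟩).2
        (by rw [Real.tan_neg, tan_pi_div_four, le_div_iff₀ hp]; change -1 * p ≤ q; linarith)
      linarith
    · linarith

end Sectors

/-- The quarter-plane sector of `(x - 1/2, y - 1/2)` containing `v = (x, y)`; this is the
paper's rotor value `m` of the spiral configuration. -/
def spiralSector (v : ℤ × ℤ) : ℕ :=
  if 2 ≤ v.1 + v.2 ∧ v.1 ≤ v.2 then 1
  else if v.1 + v.2 ≤ 1 ∧ v.1 < v.2 then 2
  else if v.1 + v.2 ≤ 0 ∧ v.2 ≤ v.1 then 3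
  else 0

theorem spiralRotor_eq (v : ℤ × ℤ) : spiralRotor v = (spiralSector v + 3) % 4 := by
  obtain ⟨X, Y⟩ := v
  unfold spiralRotor spiralSector
  dsimp only
  split_ifs with hN hW hS
  · rify at hN
    rw [floor_spiral_of_north (by linarith) (by linarith)]; rfl
  · rify at hW
    rw [floor_spiral_of_west (by linarith) (by linarith)]; rfl
  · rify at hS
    rw [floor_spiral_of_south (by linarith) (by linarith)]; rfl
  · have hE : 1 ≤ X + Y ∧ Y < X := by omega
    rify at hE
    rcases floor_spiral_of_east (p := X - 1 / 2) (q := Y - 1 / 2) (by linarith) (by linarith)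
      with h | h <;> rw [h] <;> rfl

end Spiral

open Finset

lemma succZ2_eq_of_mod_eq (u : ℤ × ℤ) {i j : ℕ} (h : i % 4 = j % 4) :
    succZ2 u i = succZ2 u j := by
  unfold succZ2
  rw [h]

lemma succZ2_succZ2_add_two (u : ℤ × ℤ) (j : ℕ) : succZ2 (succZ2 u j) (j + 2) = u := by
  obtain h | h | h | h : j % 4 = 0 ∨ j % 4 = 1 ∨ j % 4 = 2 ∨ j % 4 = 3 := by omega
  all_goals simp [succZ2, h, Nat.add_mod]

lemma inB_mono {k k' : ℕ} (h : k ≤ k') {v : ℤ × ℤ} (hv : inB k v) : inB k' v := by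
  unfold inB at *; omega

lemma inB_succZ2_of_inB_sub_one {k : ℕ} (hk : 1 ≤ k) {v : ℤ × ℤ} (hv : inB (k - 1) v)
    (j : ℕ) : inB k (succZ2 v j) := by
  unfold succZ2
  split <;> (unfold inB at *; simp only) <;> omega

/-- `succZ2 v (j + 2)` is the tail of the edge into `v` taken with rotor value `j`. -/
lemma card_inB_neighbors_lt_of_not_inB {k n : ℕ} {v : ℤ × ℤ} (hv : inB k v) (hn : 1 ≤ n)
    (hexit : ¬ inB k (succZ2 v (spiralRotor v + n))) :
    #{j ∈ range 4 | inB k (succZ2 v (j + 2))} < n := by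
  rw [spiralRotor_eq, succZ2_eq_of_mod_eq v (j := spiralSector v + 3 + n) (by omega)] at hexit
  obtain ⟨X, Y⟩ := v
  rw [card_filter]
  simp only [sum_range_succ, sum_range_zero, succZ2]
  obtain h | h | h | h : (spiralSector (X, Y) + 3 + n) % 4 = 0 ∨
      (spiralSector (X, Y) + 3 + n) % 4 = 1 ∨ (spiralSector (X, Y) + 3 + n) % 4 = 2 ∨
      (spiralSector (X, Y) + 3 + n) % 4 = 3 := by omega
  all_goals
    simp only [succZ2, h] at hexit
    unfold inB spiralSector at *
    split_ifs at * <;> omega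

namespace IsRotorWalk

variable {V : Type*} [DecidableEq V] {d : V → ℕ} {succ : V → ℕ → V} {x : ℕ → V} {r : ℕ → V → ℕ}

theorem rotor_lt (hw : IsRotorWalk d succ x r) (t : ℕ) (v : V) : r t v < d v := by
  induction t generalizing v with
  | zero => exact hw.1 v
  | succ t ih =>
    by_cases hv : v = x t
    · subst hv
      rw [hw.2.1 t]
      exact Nat.mod_lt _ ((Nat.zero_le _).trans_lt (ih _))
    · rw [hw.2.2.1 t v hv]
      exact ih v

theorem rotor_eq_s11 (hw : IsRotorWalk d succ x r) {s t : ℕ} (hst : s ≤ t) (v : V) :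
    r t v = (r s v + #{p ∈ Ico s t | x p = v}) % d v := by
  induction t, hst using Nat.le_induction with
  | base => simp [Nat.mod_eq_of_lt (hw.rotor_lt s v)]
  | succ t hst ih =>
    rw [Nat.Ico_succ_right_eq_insert_Ico hst, filter_insert]
    by_cases hv : x t = v
    · subst hv
      rw [if_pos rfl, card_insert_of_notMem (by simp), hw.2.1 t, ih, Nat.mod_add_mod, add_assoc]
    · rw [if_neg hv, hw.2.2.1 t v (Ne.symm hv), ih]

theorem rotor_eq_of_forall_ne (hw : IsRotorWalk d succ x r) {s t : ℕ} (hst : s ≤ t) {v : V}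
    (h : ∀ p, s ≤ p → p < t → x p ≠ v) : r t v = r s v := by
  rw [hw.rotor_eq_s11 hst, filter_false_of_mem fun p hp => h p (mem_Ico.1 hp).1 (mem_Ico.1 hp).2,
    card_empty, add_zero, Nat.mod_eq_of_lt (hw.rotor_lt s v)]

theorem dvd_card_of_rotor_eq (hw : IsRotorWalk d succ x r) {s t : ℕ} (hst : s ≤ t) {v : V}
    (h : r s v = r t v) : d v ∣ #{p ∈ Ico s t | x p = v} := by
  have hmod : r s v + #{p ∈ Ico s t | x p = v} ≡ r s v + 0 [MOD d v] := by
    rw [Nat.ModEq, add_zero, ← hw.rotor_eq_s11 hst, ← h]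
    exact (Nat.mod_eq_of_lt (hw.rotor_lt s v)).symm
  exact Nat.modEq_zero_iff_dvd.1 (Nat.ModEq.add_left_cancel' _ hmod)

end IsRotorWalk

lemma exists_last_visit_le {α : Type*} {x : ℕ → α} {a : α} (hx0 : x 0 = a) (t : ℕ) :
    ∃ t₀ ≤ t, x t₀ = a ∧ ∀ s, t₀ < s → s ≤ t → x s ≠ a :=
  ⟨Nat.findGreatest (x · = a) t, Nat.findGreatest_le t,
    Nat.findGreatest_spec (P := (x · = a)) (Nat.zero_le t) hx0,
    fun _ hs hst => Nat.findGreatest_is_greatest hs hst⟩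

section ModifiedWalk

variable {a b c : ℤ × ℤ} {x : ℕ → ℤ × ℤ} {r : ℕ → ℤ × ℤ → ℕ}

lemma step_of_ne (hw : IsRotorWalk (dMod b c) (succMod a b c) x r) {s : ℕ}
    (h : x (s + 1) ≠ a) : dMod b c (x s) = 4 ∧ x (s + 1) = succZ2 (x s) (r (s + 1) (x s)) := by
  have hstep := hw.2.2.2 s
  by_cases hs : x s = b ∨ x s = c
  · exact absurd (hstep.trans (if_pos hs)) h
  · exact ⟨if_neg hs, hstep.trans (if_neg hs)⟩

lemma entry_of_ne (hw : IsRotorWalk (dMod b c) (succMod a b c) x r) {p : ℕ} (hp : 0 < p)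
    (h : x p ≠ a) : dMod b c (x (p - 1)) = 4 ∧ r p (x (p - 1)) < 4 ∧
      x (p - 1) = succZ2 (x p) (r p (x (p - 1)) + 2) := by
  obtain ⟨s, rfl⟩ := Nat.exists_eq_add_one_of_ne_zero hp.ne'
  obtain ⟨hd, hstep⟩ := step_of_ne hw h
  rw [Nat.add_sub_cancel]
  exact ⟨hd, hd ▸ hw.rotor_lt _ _, by rw [hstep, succZ2_succZ2_add_two]⟩

variable {t₀ T : ℕ}

lemma exists_four_lt_card_of_rotor_eq (hw : IsRotorWalk (dMod b c) (succMod a b c) x r)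
    (ha : x t₀ = a) (hexc : ∀ s, t₀ < s → s < T → x s ≠ a) {v : ℤ × ℤ} (hv : v ≠ a)
    {p₁ p₂ : ℕ} (h₀ : t₀ < p₁) (h₁₂ : p₁ < p₂) (h₂ : p₂ ≤ T) (hv₁ : x p₁ = v) (hv₂ : x p₂ = v)
    (hrot : r p₁ (x (p₁ - 1)) = r p₂ (x (p₂ - 1))) :
    ∃ w, 4 < #{p ∈ Ioo t₀ T | x p = w} := by
  obtain ⟨-, -, hw₁⟩ := entry_of_ne hw (by omega) (hv₁ ▸ hv)
  obtain ⟨hd, -, hw₂⟩ := entry_of_ne hw (by omega) (hv₂ ▸ hv)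
  set w := x (p₂ - 1)
  have hsame : x (p₁ - 1) = w := by rw [hw₁, hw₂, hv₁, hv₂, hrot]
  have hwa : w ≠ a := hexc (p₂ - 1) (by omega) (by omega)
  have ht₀ : t₀ < p₁ - 1 := by
    refine lt_of_le_of_ne (by omega) fun h => hwa ?_
    rw [← hsame, ← h, ha]
  have hturn : 4 ≤ #{p ∈ Ico p₁ p₂ | x p = w} := by
    have hpos : 0 < #{p ∈ Ico p₁ p₂ | x p = w} :=
      card_pos.2 ⟨p₂ - 1, mem_filter.2 ⟨mem_Ico.2 ⟨by omega, by omega⟩, rfl⟩⟩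
    exact Nat.le_of_dvd hpos (hd ▸ hw.dvd_card_of_rotor_eq h₁₂.le (hsame ▸ hrot))
  refine ⟨w, hturn.trans_lt ?_⟩
  calc #{p ∈ Ico p₁ p₂ | x p = w}
      < #(insert (p₁ - 1) {p ∈ Ico p₁ p₂ | x p = w}) :=
        card_lt_card (ssubset_insert (by simp; omega))
    _ ≤ #{p ∈ Ioo t₀ T | x p = w} := by
        refine card_le_card (insert_subset (mem_filter.2 ⟨mem_Ioo.2 ⟨ht₀, by omega⟩, hsame⟩) ?_)
        exact filter_subset_filter _ fun p hp => by simp only [mem_Ico, mem_Ioo] at hp ⊢; omega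

lemma card_visits_le_card_of_mapsTo (hw : IsRotorWalk (dMod b c) (succMod a b c) x r)
    (ha : x t₀ = a) (hexc : ∀ s, t₀ < s → s < T → x s ≠ a)
    (hbound : ∀ w, #{p ∈ Ioo t₀ T | x p = w} ≤ 4) {v : ℤ × ℤ} (hv : v ≠ a) {J : Finset ℕ}
    (hJ : ∀ p, t₀ < p → p ≤ T → x p = v → r p (x (p - 1)) ∈ J) :
    #{p ∈ Ioo t₀ (T + 1) | x p = v} ≤ #J := by
  refine card_le_card_of_injOn (fun p => r p (x (p - 1))) ?_ ?_
  · intro p hp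
    obtain ⟨hp, hpv⟩ := mem_filter.1 (mem_coe.1 hp)
    exact hJ p (mem_Ioo.1 hp).1 (by have := (mem_Ioo.1 hp).2; omega) hpv
  · have key : ∀ p₁ p₂, p₁ ∈ {p ∈ Ioo t₀ (T + 1) | x p = v} →
        p₂ ∈ {p ∈ Ioo t₀ (T + 1) | x p = v} → p₁ < p₂ →
        r p₁ (x (p₁ - 1)) ≠ r p₂ (x (p₂ - 1)) := by
      intro p₁ p₂ h₁ h₂ h₁₂ hrot
      simp only [mem_filter, mem_Ioo] at h₁ h₂
      obtain ⟨w, hw⟩ := exists_four_lt_card_of_rotor_eq hw ha hexc hv h₁.1.1 h₁₂ (by omega)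
        h₁.2 h₂.2 hrot
      exact (hbound w).not_gt hw
    intro p₁ h₁ p₂ h₂ hrot
    by_contra hne
    rcases Nat.lt_or_gt_of_ne hne with h | h
    · exact key p₁ p₂ h₁ h₂ h hrot
    · exact key p₂ p₁ h₂ h₁ h hrot.symm

theorem card_visits_le_four (hw : IsRotorWalk (dMod b c) (succMod a b c) x r)
    (ha : x t₀ = a) : ∀ T, (∀ s, t₀ < s → s < T → x s ≠ a) →
      ∀ v, #{p ∈ Ioo t₀ T | x p = v} ≤ 4 := by
  intro T
  induction T with
  | zero => simp
  | succ T ih =>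
    intro hexc v
    have hexc' : ∀ s, t₀ < s → s < T → x s ≠ a := fun s h₁ h₂ => hexc s h₁ (by omega)
    by_cases hv : v = a
    · subst hv
      rw [filter_false_of_mem fun p hp => hexc p (mem_Ioo.1 hp).1 (mem_Ioo.1 hp).2]
      simp
    · refine (card_visits_le_card_of_mapsTo hw ha hexc' (ih hexc') hv
        fun p hp _ hpv => ?_).trans_eq (card_range 4)
      exact mem_range.2 (entry_of_ne hw (by omega) (hpv ▸ hv)).2.1

lemma card_visits_le_card_inB_neighbors (hw : IsRotorWalk (dMod b c) (succMod a b c) x r)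
    (ha : x t₀ = a) (hexc : ∀ s, t₀ < s → s < T → x s ≠ a) {k : ℕ}
    (hin : ∀ s < T, inB k (x s)) {v : ℤ × ℤ} (hv : v ≠ a) :
    #{p ∈ Ioo t₀ (T + 1) | x p = v} ≤ #{j ∈ range 4 | inB k (succZ2 v (j + 2))} := by
  refine card_visits_le_card_of_mapsTo hw ha hexc (card_visits_le_four hw ha T hexc) hv
    fun p hp hpT hpv => ?_
  obtain ⟨-, hlt, hprev⟩ := entry_of_ne hw (by omega) (hpv ▸ hv)
  refine mem_filter.2 ⟨mem_range.2 hlt, ?_⟩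
  rw [← hpv, ← hprev]
  exact hin _ (by omega)

theorem exists_visit_of_entersNewLayer (hw : IsRotorWalk (dMod b c) (succMod a b c) x r)
    (hr0 : ∀ v, r 0 v = rotInit b c v) (hx0 : x 0 = a) {t₁ t₂ : ℕ} (h₁₂ : t₁ < t₂)
    (h₁ : entersNewLayer x t₁) (h₂ : entersNewLayer x t₂) : ∃ s, t₁ ≤ s ∧ s < t₂ ∧ x s = a := by
  by_contra! hno
  obtain ⟨k₁, -, hin₁, hout₁⟩ := h₁
  obtain ⟨k₂, hk₂, hin₂, hout₂⟩ := h₂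
  obtain ⟨T, rfl⟩ : ∃ T, t₂ = T + 1 := ⟨t₂ - 1, by omega⟩
  have ht₁ : 0 < t₁ := Nat.pos_of_ne_zero fun h => hno 0 h.le (by omega) hx0
  obtain ⟨t₀, ht₀, ha, hlast⟩ := exists_last_visit_le hx0 t₁
  have ht₀₁ : t₀ < t₁ := lt_of_le_of_ne ht₀ fun h => hno t₁ le_rfl h₁₂ (h ▸ ha)
  have hexc : ∀ s, t₀ < s → s < T → x s ≠ a := fun s h h' => by
    rcases le_or_gt s t₁ with hs | hs
    exacts [hlast s h hs, hno s hs.le (by omega)]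
  have hk : k₁ < k₂ := lt_of_not_ge fun h => hout₁ (inB_mono h (hin₂ t₁ h₁₂))
  obtain ⟨hd, hstep⟩ := step_of_ne hw (s := T) fun h => hout₂ (h ▸ hx0 ▸ hin₂ 0 (by omega))
  set v := x T
  have hv : ¬ inB (k₂ - 1) v := fun h => hout₂ (hstep ▸ inB_succZ2_of_inB_sub_one hk₂ h _)
  have hnew : ∀ s < t₁, x s ≠ v := fun s hs h => hv (h ▸ inB_mono (by omega) (hin₁ s hs))
  have hva : v ≠ a := fun h => hnew 0 ht₁ (hx0.trans h.symm)
  have hbc : ¬ (v = b ∨ v = c) := fun h => by simp [dMod, h] at hd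
  set n := #{p ∈ Ico t₁ (T + 1) | x p = v}
  have hrot : r (T + 1) v = (spiralRotor v + n) % 4 := by
    rw [hw.rotor_eq_s11 h₁₂.le, hd,
      hw.rotor_eq_of_forall_ne (Nat.zero_le t₁) fun p _ hp => hnew p hp, hr0, rotInit, if_neg hbc]
  have hexit : ¬ inB k₂ (succZ2 v (spiralRotor v + n)) := by
    rwa [hstep, hrot, succZ2_eq_of_mod_eq v (Nat.mod_mod _ _)] at hout₂
  have hn : 1 ≤ n := card_pos.2 ⟨T, mem_filter.2 ⟨mem_Ico.2 ⟨by omega, by omega⟩, rfl⟩⟩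
  have hle : n ≤ #{j ∈ range 4 | inB k₂ (succZ2 v (j + 2))} := by
    refine (card_le_card (filter_subset_filter _ fun p hp => ?_)).trans
      (card_visits_le_card_inB_neighbors hw ha hexc (fun s hs => hin₂ s (by omega)) hva)
    simp only [mem_Ico, mem_Ioo] at hp ⊢
    omega
  exact (card_inB_neighbors_lt_of_not_inB (hin₂ T (by omega)) hn hexit).not_ge hle

end ModifiedWalk

theorem layers_lemma_general (a b c : ℤ × ℤ)
    (x : ℕ → ℤ × ℤ) (r : ℕ → ℤ × ℤ → ℕ)
    (hwalk : IsRotorWalk (dMod b c) (succMod a b c) x r)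
    (hr0 : ∀ v, r 0 v = rotInit b c v) (hx0 : x 0 = a) :
    (∀ t₁ t₂, t₁ < t₂ → entersNewLayer x t₁ → entersNewLayer x t₂ →
      ∃ s, t₁ ≤ s ∧ s < t₂ ∧ x s = a) ∧
    (∀ t₁ t₂, t₁ < t₂ → x t₁ = a → x t₂ = a →
      (∀ s, t₁ < s → s < t₂ → x s ≠ a) →
      ∀ v, ((Finset.Ioo t₁ t₂).filter fun s => x s = v).card ≤ 4) :=
  ⟨fun _ _ h₁₂ h₁ h₂ => exists_visit_of_entersNewLayer hwalk hr0 hx0 h₁₂ h₁ h₂,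
    fun _ t₂ _ ha _ hexc => card_visits_le_four hwalk ha t₂ hexc⟩

/-- Lemma `layers` for the ℤ² rotor walk with the spiral initial configuration. -/
theorem layers_lemma (a b c : ℤ × ℤ) (hbc : b ≠ c) (hab : a ≠ b) (hac : a ≠ c)
    (x : ℕ → ℤ × ℤ) (r : ℕ → ℤ × ℤ → ℕ)
    (hwalk : IsRotorWalk (dMod b c) (succMod a b c) x r)
    (hr0 : ∀ v, r 0 v = rotInit b c v) (hx0 : x 0 = a) :
    (∀ t₁ t₂, t₁ < t₂ → entersNewLayer x t₁ → entersNewLayer x t₂ →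
      ∃ s, t₁ ≤ s ∧ s < t₂ ∧ x s = a) ∧
    (∀ t₁ t₂, t₁ < t₂ → x t₁ = a → x t₂ = a →
      (∀ s, t₁ < s → s < t₂ → x s ≠ a) →
      ∀ v, ((Finset.Ioo t₁ t₂).filter fun s => x s = v).card ≤ 4) :=
  layers_lemma_general a b c x r hwalk hr0 hx0
end

section
/- Given p_1,...,p_n in (0,1] with p_1+...+p_n = 1, there exists a sequence z_1, z_2, ... with values in {1,...,n} such that for all i in {1,...,n} and all t >= 1, | p_i t - #{s <= t : z_s = i} | <= 1. -/
/-!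
Schedule greedily, earliest deadline first. When `i` has occurred `c` times, its next occurrence
is released at the first step `t` with `c ≤ p i * t` and is due by time `(c + 1) / p i`; each step
emits, among the released symbols, one with the earliest deadline (as `∑ p = 1`, some symbol is
always released). Releasing bounds the count of `i` after step `t` by `p i * t + 1`. If the count
of `j` at time `T` is below `p j * T - 1`, a job of `j` is overdue; let `a` be the last step before
`T` that ran a job due at `T` or later. The `T - a` jobs run after step `a`, together with the
overdue one, are all due before `T` and none was released at step `a` (earliest deadline first
would have preferred it), but at most `p i * (T - a)` jobs of each `i` fit into that window.
-/

open Finset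

theorem Nat.exists_last_before (P : ℕ → Prop) (T : ℕ) :
    ∃ a ≤ T, (∀ s, a ≤ s → s < T → ¬ P s) ∧ ∀ b, a = b + 1 → P b := by
  induction T with
  | zero =>
    exact ⟨0, le_rfl, fun s _ hs => absurd hs (by omega), fun b hb => absurd hb (by omega)⟩
  | succ T ih =>
    by_cases hT : P T
    · exact ⟨T + 1, le_rfl, fun s hs _ => absurd hs (by omega),
        fun b hb => by rwa [← Nat.add_right_cancel hb]⟩
    · obtain ⟨a, haT, hnot, hlast⟩ := ih
      refine ⟨a, by omega, fun s has hsT => ?_, hlast⟩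
      obtain hsT | rfl : s < T ∨ s = T := by omega
      exacts [hnot s has hsT, hT]

namespace EarliestDeadlineFirst

variable {ι : Type*} [Fintype ι] (p : ι → ℝ)

noncomputable def released (t : ℕ) (c : ι → ℕ) : Finset ι := {i | (c i : ℝ) ≤ p i * t}

noncomputable def deadline (c : ι → ℕ) (i : ι) : ℝ := (c i + 1) / p i

variable [Nonempty ι]

noncomputable def choice (t : ℕ) (c : ι → ℕ) : ι :=
  if h : (released p t c).Nonempty then ((released p t c).exists_min_image (deadline p c) h).choose
  else Classical.arbitrary ι

variable {p}

theorem choice_mem {t : ℕ} {c : ι → ℕ} (h : (released p t c).Nonempty) :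
    choice p t c ∈ released p t c := by
  rw [choice, dif_pos h]
  exact (exists_min_image _ _ h).choose_spec.1

theorem deadline_choice_le {t : ℕ} {c : ι → ℕ} {i : ι} (hi : i ∈ released p t c) :
    deadline p c (choice p t c) ≤ deadline p c i := by
  rw [choice, dif_pos ⟨i, hi⟩]
  exact (exists_min_image _ _ ⟨i, hi⟩).choose_spec.2 i hi

theorem released_nonempty (hsum : ∑ i, p i = 1) {t : ℕ} {c : ι → ℕ}
    (hc : ∑ i, (c i : ℝ) ≤ t) :
    (released p t c).Nonempty := by
  by_contra h
  have hlt : ∀ i ∈ univ, p i * t < c i := by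
    simpa [released, filter_eq_empty_iff, not_nonempty_iff_eq_empty] using h
  have := sum_lt_sum_of_nonempty univ_nonempty hlt
  rw [← sum_mul, hsum, one_mul] at this
  linarith

variable [DecidableEq ι]

variable (p) in
noncomputable def count : ℕ → ι → ℕ
  | 0 => 0
  | t + 1 => count t + Pi.single (choice p (t + 1) (count t)) 1

-- the symbol emitted at time `t + 1`, after `count p t`
variable (p) in
noncomputable def next (t : ℕ) : ι := choice p (t + 1) (count p t)

theorem count_succ (t : ℕ) : count p (t + 1) = count p t + Pi.single (next p t) 1 := rfl

theorem count_succ_next (t : ℕ) : count p (t + 1) (next p t) = count p t (next p t) + 1 := by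
  simp [count_succ]

theorem count_succ_of_ne {t : ℕ} {i : ι} (h : i ≠ next p t) :
    count p (t + 1) i = count p t i := by
  simp [count_succ, h]

theorem sum_count (t : ℕ) : ∑ i, count p t i = t := by
  induction t with
  | zero => simp [count]
  | succ t ih => simp [count_succ, sum_add_distrib, ih]

theorem count_mono (i : ι) : Monotone (count p · i) :=
  monotone_nat_of_le_succ fun t => by simp [count_succ]

theorem next_mem_released (hsum : ∑ i, p i = 1) (t : ℕ) :
    next p t ∈ released p (t + 1) (count p t) :=
  choice_mem <| released_nonempty hsum <| by
    rw [← Nat.cast_sum, sum_count]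
    push_cast
    linarith

theorem count_le (hp : ∀ i, 0 ≤ p i) (hsum : ∑ i, p i = 1) (t : ℕ) (i : ι) :
    (count p t i : ℝ) ≤ p i * t + 1 := by
  induction t with
  | zero => simp [count]
  | succ t ih =>
    by_cases hi : i = next p t
    · have hrel := next_mem_released hsum t
      simp only [released, mem_filter, mem_univ, true_and] at hrel
      subst hi
      push_cast at hrel
      push_cast [count_succ_next]
      linarith
    · rw [count_succ_of_ne hi]
      push_cast
      linarith [hp i]

theorem card_filter_next_pred_eq_count (t : ℕ) (i : ι) :
    #{s ∈ Icc 1 t | next p (s - 1) = i} = count p t i := by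
  induction t with
  | zero => simp [count]
  | succ t ih =>
    rw [← insert_Icc_right_eq_Icc_add_one (by omega), filter_insert, count_succ, Pi.add_apply,
      ← ih]
    by_cases hi : i = next p t
    · subst hi
      simp
    · simp [Ne.symm hi]

theorem mul_succ_lt_of_le_deadline_next (hp : ∀ i, 0 < p i) {b T m : ℕ} {i : ι}
    (hb : p (next p b) * T ≤ count p b (next p b) + 1)
    (hm : count p b i ≤ m) (hmT : (m : ℝ) + 1 < p i * T) : p i * (b + 1) < m := by
  have hm' : (count p b i : ℝ) ≤ m := by exact_mod_cast hm
  by_contra! h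
  have hi : i ∈ released p (b + 1) (count p b) := by
    simp only [released, mem_filter, mem_univ, true_and]
    push_cast
    linarith
  have hmin : deadline p (count p b) (next p b) ≤ deadline p (count p b) i :=
    deadline_choice_le hi
  have hnext : (T : ℝ) ≤ deadline p (count p b) (next p b) := by
    rw [deadline, le_div_iff₀ (hp _)]
    linarith
  have hdi : deadline p (count p b) i < T := by
    rw [deadline, div_lt_iff₀ (hp _)]
    linarith
  linarith

theorem count_eq_or_lt_of_deadlines_lt {a T : ℕ}
    (hstep : ∀ s, a ≤ s → s < T → (count p s (next p s) : ℝ) + 1 < p (next p s) * T)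
    (i : ι) {t : ℕ} (hat : a ≤ t) (htT : t ≤ T) :
    count p t i = count p a i ∨ (count p t i : ℝ) < p i * T := by
  induction t, hat using Nat.le_induction with
  | base => exact Or.inl rfl
  | succ t hat ih =>
    by_cases hi : i = next p t
    · subst hi
      right
      push_cast [count_succ_next]
      exact hstep t hat (by omega)
    · rw [count_succ_of_ne hi]
      exact ih (by omega)

theorem count_sub_count_le (hp : ∀ i, 0 < p i) {a T : ℕ} {j : ι} (haT : a ≤ T)
    (hj : (count p T j : ℝ) + 1 < p j * T)
    (hstep : ∀ s, a ≤ s → s < T → (count p s (next p s) : ℝ) + 1 < p (next p s) * T)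
    (hlast : ∀ b, a = b + 1 → p (next p b) * T ≤ count p b (next p b) + 1) (i : ι) :
    ((count p T i + if i = j then 1 else 0 : ℕ) : ℝ) - count p a i ≤ p i * (T - a) := by
  set M := count p T i + if i = j then 1 else 0
  have hpT : p i * a ≤ p i * T := by
    gcongr
    exact (hp i).le
  by_cases hM : M ≤ count p a i
  · have : (M : ℝ) ≤ count p a i := by exact_mod_cast hM
    linarith
  have hMT : (M : ℝ) < p i * T := by
    by_cases hij : i = j
    · subst hij
      simpa [M] using hj
    · have hTa : count p T i ≠ count p a i := by
        simp only [M, hij, if_false, add_zero, not_le] at hM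
        omega
      simpa [M, hij] using (count_eq_or_lt_of_deadlines_lt hstep i haT le_rfl).resolve_left hTa
  have hstart : p i * a ≤ count p a i := by
    rcases a with _ | b
    · simp
    · have hlt : (count p (b + 1) i : ℝ) + 1 < p i * T := by
        have : count p (b + 1) i + 1 ≤ M := by omega
        have : ((count p (b + 1) i + 1 : ℕ) : ℝ) ≤ M := by exact_mod_cast this
        push_cast at this
        linarith
      push_cast
      exact (mul_succ_lt_of_le_deadline_next hp (hlast b rfl) (count_mono i b.le_succ) hlt).le
  linarith

theorem le_count (hp : ∀ i, 0 < p i) (hsum : ∑ i, p i = 1) (t : ℕ) (j : ι) :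
    p j * t - 1 ≤ count p t j := by
  by_contra! hj
  obtain ⟨a, hat, hstep, hlast⟩ :=
    Nat.exists_last_before (fun s => p (next p s) * t ≤ count p s (next p s) + 1) t
  have hsub := sum_le_sum fun i (_ : i ∈ univ) =>
    count_sub_count_le hp hat (by linarith) (fun s has hst => lt_of_not_ge (hstep s has hst))
      hlast i
  rw [sum_sub_distrib, ← sum_mul, hsum, one_mul, ← Nat.cast_sum, ← Nat.cast_sum,
    sum_add_distrib, sum_count, sum_count, sum_ite_eq', if_pos (mem_univ j)] at hsub
  push_cast at hsub
  linarith

end EarliestDeadlineFirst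

theorem low_discrepancy_sequence_general (n : ℕ) (p : Fin n → ℝ)
    (hp : ∀ i, 0 < p i ∧ p i ≤ 1) (hsum : ∑ i, p i = 1) :
    ∃ z : ℕ → Fin n, ∀ (i : Fin n) (t : ℕ), 1 ≤ t →
      |p i * (t : ℝ) - (((Finset.Icc 1 t).filter fun s => z s = i).card : ℝ)| ≤ 1 := by
  have : Nonempty (Fin n) :=
    univ_nonempty_iff.mp <| nonempty_of_sum_ne_zero (f := p) (by simp [hsum])
  have hpos : ∀ i, 0 < p i := fun i => (hp i).1
  refine ⟨fun s => EarliestDeadlineFirst.next p (s - 1), fun i t _ => ?_⟩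
  rw [EarliestDeadlineFirst.card_filter_next_pred_eq_count, abs_le]
  constructor
  · linarith [EarliestDeadlineFirst.count_le (fun i => (hpos i).le) hsum t i]
  · linarith [EarliestDeadlineFirst.le_count hpos hsum t i]

/-- **Low-discrepancy sequence** (Proposition `seq`). -/
theorem low_discrepancy_sequence (n : ℕ) (hn : 0 < n) (p : Fin n → ℝ)
    (hp : ∀ i, 0 < p i ∧ p i ≤ 1) (hsum : ∑ i, p i = 1) :
    ∃ z : ℕ → Fin n, ∀ (i : Fin n) (t : ℕ), 1 ≤ t →
      |p i * (t : ℝ) - (((Finset.Icc 1 t).filter fun s => z s = i).card : ℝ)| ≤ 1 :=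
  low_discrepancy_sequence_general n p hp hsum
end
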